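/- Let k ≥ 2 be an integer and 1 < p ≤ π²(k − 1/2)² − 1. Then the function ψ_k(x) := sin^p(πx)(1/(k−x)^p + 1/(k+x−1)^p) is decreasing on the interval [1/2, 1]. -/

import Mathlib

/-!
With `t = x - 1/2` and `m = k - 1/2` one has `ψ_k(x) = cos (π t) ^ p * powSum m (-p) t`, whose
derivative has the sign of `cos (π t) * powDiff m (-P) t - π * sin (π t) * powSum m (1 - P) t`
with `P = p + 1`. For `π² t ≥ 1` this is negative because `tan (π t) ≥ π t ≥ 1 / π`. For smaller
`t` the expression vanishes at `t = 0` and is decreasing: by `sin (π u) ≥ π u cos (π u)` its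
derivative reduces to an algebraic inequality in `m`, `u`, `P`, which is immediate when
`P ≤ π² (m - u)²` and otherwise follows from Bernoulli's inequality applied to
`((m - u) / (m + u)) ^ P` from both sides. At first order in `t` the bound `P ≤ π² m²` is exactly
what is needed.
-/

open Real

noncomputable def powSum (m s t : ℝ) : ℝ := (m - t) ^ s + (m + t) ^ s

noncomputable def powDiff (m s t : ℝ) : ℝ := (m - t) ^ s - (m + t) ^ s

section powSumDiff

variable {m s t : ℝ}

lemma hasDerivAt_powSum (h₁ : m - t ≠ 0) (h₂ : m + t ≠ 0) :
    HasDerivAt (powSum m s) (-s * powDiff m (s - 1) t) t := by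
  have hsub := ((hasDerivAt_id t).const_sub m).rpow_const (p := s) (Or.inl h₁)
  have hadd := ((hasDerivAt_id t).const_add m).rpow_const (p := s) (Or.inl h₂)
  exact (hsub.add hadd).congr_deriv (by simp only [powDiff, id]; ring)

lemma hasDerivAt_powDiff (h₁ : m - t ≠ 0) (h₂ : m + t ≠ 0) :
    HasDerivAt (powDiff m s) (-s * powSum m (s - 1) t) t := by
  have hsub := ((hasDerivAt_id t).const_sub m).rpow_const (p := s) (Or.inl h₁)
  have hadd := ((hasDerivAt_id t).const_add m).rpow_const (p := s) (Or.inl h₂)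
  exact (hsub.sub hadd).congr_deriv (by simp only [powSum, id]; ring)

lemma powDiff_nonneg (hs : s ≤ 0) (ht : 0 ≤ t) (htm : t < m) : 0 ≤ powDiff m s t :=
  sub_nonneg.2 (rpow_le_rpow_of_nonpos (by linarith) (by linarith) hs)

end powSumDiff

lemma div_rpow_mul_add_le {a b P : ℝ} (ha : 0 < a) (hb : 0 < b) (hP : 1 ≤ P) :
    (a / b) ^ P * (a + P * (b - a)) ≤ a := by
  have hbern : 1 + P * (b / a - 1) ≤ (b / a) ^ P := by
    simpa using one_add_mul_self_le_rpow_one_add (s := b / a - 1) (by linarith [div_pos hb ha]) hP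
  have hinv : (a / b) ^ P * (b / a) ^ P = 1 := by
    rw [← mul_rpow (by positivity) (by positivity), div_mul_div_comm, mul_comm a b,
      div_self (by positivity), one_rpow]
  calc (a / b) ^ P * (a + P * (b - a)) = a * ((a / b) ^ P * (1 + P * (b / a - 1))) := by
        field_simp
    _ ≤ a * ((a / b) ^ P * (b / a) ^ P) := by gcongr
    _ = a := by rw [hinv, mul_one]

lemma sub_mul_le_div_rpow_mul {a b Q : ℝ} (ha : 0 ≤ a) (hb : 0 < b) (hQ : 1 ≤ Q) :
    b - Q * (b - a) ≤ (a / b) ^ Q * b := by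
  have hbern : 1 + Q * (a / b - 1) ≤ (a / b) ^ Q := by
    simpa using one_add_mul_self_le_rpow_one_add (s := a / b - 1)
      (by linarith [div_nonneg ha hb.le]) hQ
  calc b - Q * (b - a) = (1 + Q * (a / b - 1)) * b := by field_simp; ring
    _ ≤ (a / b) ^ Q * b := by gcongr

-- `c` stands for `π ^ 2 > 9.86`.
lemma poly_le_sq_mul {c m u P : ℝ} (hc : 9.86 ≤ c) (hm : 3 / 2 ≤ m) (hu : 0 < u)
    (hcu : c * u ≤ 1) (hP : c * (m - u) ^ 2 ≤ P) :
    m * (m - u) + 2 * u * P * m + P * (2 * m + u) * (m - u)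
      ≤ P ^ 2 * (m ^ 2 - 4 * m * u - 3 * u ^ 2) := by
  have hu' : u ≤ 1 / 9.86 := by nlinarith
  have ha : 1 ≤ m - u := by linarith
  have hq : 0.7 * m ^ 2 ≤ m ^ 2 - 4 * m * u - 3 * u ^ 2 := by nlinarith
  have hPq : 6.9 * ((m - u) ^ 2 * m ^ 2) ≤ P * (m ^ 2 - 4 * m * u - 3 * u ^ 2) := by
    calc 6.9 * ((m - u) ^ 2 * m ^ 2) ≤ c * (m - u) ^ 2 * (m ^ 2 - 4 * m * u - 3 * u ^ 2) := by
          nlinarith [mul_le_mul hc hq (by positivity) (by linarith), sq_nonneg (m - u)]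
      _ ≤ P * (m ^ 2 - 4 * m * u - 3 * u ^ 2) := by gcongr; nlinarith
  have hP1 : 1 ≤ P := by nlinarith
  have hlin : 2 * u * m + (2 * m + u) * (m - u) + m * (m - u)
      ≤ P * (m ^ 2 - 4 * m * u - 3 * u ^ 2) := by
    nlinarith [mul_le_mul ha hm (by norm_num) (by linarith)]
  nlinarith [mul_le_mul_of_nonneg_left hlin (by linarith : (0 : ℝ) ≤ P),
    mul_le_mul_of_nonneg_right hP1 (by nlinarith : (0 : ℝ) ≤ m * (m - u))]

lemma two_mul_sub_le {c m u P : ℝ} (hc : 9.86 ≤ c) (hm : 3 / 2 ≤ m) (hu : 0 < u)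
    (hcu : c * u ≤ 1) (hP : c * (m - u) ^ 2 ≤ P) :
    2 * m - u ≤ ((m - u) / (m + u)) ^ (P + 1) * (2 * m + u)
      + P * ((m - u) - ((m - u) / (m + u)) ^ (P + 1) * (m + u)) := by
  have hu1 : u ≤ 1 / 9.86 := by nlinarith
  have ha : 1 ≤ m - u := by linarith
  have hb : 0 < m + u := by linarith
  have hP1 : 1 ≤ P := by nlinarith
  have hρ := div_rpow_mul_add_le (a := m - u) (by linarith) hb hP1
  have hσ := sub_mul_le_div_rpow_mul (a := m - u) (by linarith) hb (by linarith : 1 ≤ P + 1)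
  have hσρ : ((m - u) / (m + u)) ^ (P + 1) * (m + u) = ((m - u) / (m + u)) ^ P * (m - u) := by
    rw [rpow_add_one (div_pos (by linarith) hb).ne']
    field_simp
  set ρ := ((m - u) / (m + u)) ^ P
  set σ := ((m - u) / (m + u)) ^ (P + 1)
  have hpoly := poly_le_sq_mul hc hm hu hcu hP
  have hw : 0 < (m - u) + 2 * u * P := by nlinarith
  have hρw : 2 * u * P ≤ (1 - ρ) * ((m - u) + 2 * u * P) := by linarith
  refine le_of_mul_le_mul_right ?_ (mul_pos hb hw)
  linarith [mul_le_mul_of_nonneg_right hσ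
      (by positivity : (0 : ℝ) ≤ (2 * m + u) * ((m - u) + 2 * u * P)),
    mul_le_mul_of_nonneg_left hρw (by positivity : (0 : ℝ) ≤ P * (m - u) * (m + u)),
    mul_le_mul_of_nonneg_left hpoly (by positivity : (0 : ℝ) ≤ 2 * u),
    congrArg (· * (P * (m + u) * ((m - u) + 2 * u * P))) hσρ]

lemma mul_powSum_le {m u P : ℝ} (hm : 3 / 2 ≤ m) (hu : 0 < u) (hπu : π ^ 2 * u ≤ 1)
    (hP : 2 < P) (hPm : P ≤ π ^ 2 * m ^ 2) :
    P * powSum m (-(P + 1)) u ≤ π ^ 2 * (powSum m (1 - P) u + P * u * powDiff m (-P) u) := by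
  have hπ : 9.86 ≤ π ^ 2 := by nlinarith [pi_gt_d6]
  have ha : 0 < m - u := by nlinarith
  have hb : 0 < m + u := by linarith
  have hshift : ∀ x : ℝ, 0 < x →
      x ^ (-P) = x ^ (-(P + 1)) * x ∧ x ^ (1 - P) = x ^ (-(P + 1)) * x ^ 2 :=
    fun x hx => ⟨by rw [← rpow_add_one hx.ne']; ring_nf,
      by rw [← rpow_natCast, ← rpow_add hx]; norm_num; ring_nf⟩
  obtain ⟨ha₁, ha₂⟩ := hshift _ ha
  obtain ⟨hb₁, hb₂⟩ := hshift _ hb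
  have hXY : (m + u) ^ (-(P + 1)) = (m - u) ^ (-(P + 1)) * ((m - u) / (m + u)) ^ (P + 1) := by
    rw [div_rpow ha.le hb.le, rpow_neg ha.le, rpow_neg hb.le]
    field_simp
  have hYX : (m + u) ^ (-P) ≤ (m - u) ^ (-P) :=
    rpow_le_rpow_of_nonpos ha (by linarith) (by linarith)
  simp only [powSum, powDiff, ha₁, ha₂, hb₁, hb₂] at hYX ⊢
  set X := (m - u) ^ (-(P + 1))
  set Y := (m + u) ^ (-(P + 1))
  have hX : 0 < X := rpow_pos_of_pos ha _
  have hY : 0 < Y := rpow_pos_of_pos hb _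
  rcases le_or_gt P (π ^ 2 * (m - u) ^ 2) with hsmall | hlarge
  · linarith [mul_nonneg (sub_nonneg.2 hsmall) hX.le, mul_nonneg (sub_nonneg.2 hsmall) hY.le,
      mul_nonneg (mul_nonneg (sq_nonneg π) hY.le)
        (by nlinarith : (0 : ℝ) ≤ (m + u) ^ 2 - (m - u) ^ 2),
      mul_nonneg (mul_nonneg (mul_nonneg (sq_nonneg π) (by linarith : (0 : ℝ) ≤ P)) hu.le)
        (sub_nonneg.2 hYX)]
  · have hscal := two_mul_sub_le hπ hm hu hπu hlarge.le
    rw [hXY] at hYX ⊢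
    set σ := ((m - u) / (m + u)) ^ (P + 1)
    linarith [mul_le_mul_of_nonneg_right hPm (by positivity : (0 : ℝ) ≤ X + X * σ),
      mul_le_mul_of_nonneg_left hscal (by positivity : (0 : ℝ) ≤ π ^ 2 * u * X)]

lemma mul_cos_le_sin {x : ℝ} (h₀ : 0 ≤ x) (h₁ : x < π / 2) : x * cos x ≤ sin x := by
  have hcos : 0 < cos x := cos_pos_of_mem_Ioo ⟨by linarith [pi_pos], h₁⟩
  have := le_tan h₀ h₁
  rwa [tan_eq_sin_div_cos, le_div_iff₀ hcos] at this

lemma hasDerivAt_sin_mul_powSum_sub {m P u : ℝ} (h₁ : m - u ≠ 0) (h₂ : m + u ≠ 0) :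
    HasDerivAt (fun u => π * sin (π * u) * powSum m (1 - P) u - cos (π * u) * powDiff m (-P) u)
      (π ^ 2 * cos (π * u) * powSum m (1 - P) u + π * P * sin (π * u) * powDiff m (-P) u
        - P * cos (π * u) * powSum m (-(P + 1)) u) u := by
  have hπu : HasDerivAt (fun u => π * u) π u := by simpa using (hasDerivAt_id u).const_mul π
  have hsin := (hasDerivAt_sin (π * u)).comp u hπu
  have hcos := (hasDerivAt_cos (π * u)).comp u hπu
  have hS := hasDerivAt_powSum (s := 1 - P) h₁ h₂
  have hD := hasDerivAt_powDiff (s := -P) h₁ h₂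
  rw [show 1 - P - 1 = -P by ring] at hS
  rw [show -P - 1 = -(P + 1) by ring] at hD
  exact (((hsin.const_mul π).mul hS).sub (hcos.mul hD)).congr_deriv
    (by simp only [Function.comp]; ring)

lemma cos_mul_powDiff_le {m t P : ℝ} (hm : 3 / 2 ≤ m) (ht₀ : 0 ≤ t) (ht : t < 1 / 2)
    (hP : 2 < P) (hPm : P ≤ π ^ 2 * m ^ 2) :
    cos (π * t) * powDiff m (-P) t ≤ π * sin (π * t) * powSum m (1 - P) t := by
  have hπ := pi_pos
  have hπt : π * t < π / 2 := by nlinarith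
  have hcos : 0 < cos (π * t) := cos_pos_of_mem_Ioo ⟨by nlinarith, hπt⟩
  rcases le_or_gt 1 (π ^ 2 * t) with hlarge | hsmall
  · have hcs : cos (π * t) ≤ π * sin (π * t) := by
      nlinarith [mul_cos_le_sin (by positivity) hπt]
    have hDS : powDiff m (-P) t ≤ powSum m (1 - P) t := by
      have h₁ : (m - t) ^ (-P) ≤ (m - t) ^ (1 - P) :=
        rpow_le_rpow_of_exponent_le (by linarith) (by linarith)
      have h₂ : 0 < (m + t) ^ (-P) := rpow_pos_of_pos (by linarith) _
      have h₃ : 0 < (m + t) ^ (1 - P) := rpow_pos_of_pos (by linarith) _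
      simp only [powDiff, powSum]
      linarith
    have hS : 0 ≤ powSum m (1 - P) t :=
      add_nonneg (rpow_nonneg (by linarith) _) (rpow_nonneg (by linarith) _)
    calc cos (π * t) * powDiff m (-P) t ≤ cos (π * t) * powSum m (1 - P) t := by gcongr
      _ ≤ π * sin (π * t) * powSum m (1 - P) t := by gcongr
  · have hmono : MonotoneOn (fun u => π * sin (π * u) * powSum m (1 - P) u
        - cos (π * u) * powDiff m (-P) u) (Set.Icc 0 t) := by
      have hderiv : ∀ u ∈ Set.Icc 0 t, HasDerivAt _ _ u := fun u hu =>
        hasDerivAt_sin_mul_powSum_sub (m := m) (P := P) (by linarith [hu.2]) (by linarith [hu.1])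
      refine monotoneOn_of_hasDerivWithinAt_nonneg (convex_Icc 0 t)
        (fun u hu => (hderiv u hu).continuousAt.continuousWithinAt)
        (fun u hu => (hderiv u (interior_subset hu)).hasDerivWithinAt) fun u hu => ?_
      rw [interior_Icc] at hu
      obtain ⟨hu₀, hut⟩ := hu
      have hπu : π * u < π / 2 := by nlinarith
      have hcosu : 0 < cos (π * u) := cos_pos_of_mem_Ioo ⟨by nlinarith, hπu⟩
      have hsinu := mul_cos_le_sin (by positivity) hπu
      have hE := mul_powSum_le hm hu₀ (by nlinarith) hP hPm
      have hD := powDiff_nonneg (m := m) (s := -P) (by linarith) hu₀.le (by linarith)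
      linarith [mul_le_mul_of_nonneg_left hE hcosu.le,
        mul_le_mul_of_nonneg_right hsinu (by positivity : 0 ≤ π * P * powDiff m (-P) u)]
    have := hmono (Set.left_mem_Icc.2 ht₀) (Set.right_mem_Icc.2 ht₀) ht₀
    simpa [powDiff] using this

lemma antitoneOn_cos_rpow_mul_powSum {m p : ℝ} (hm : 3 / 2 ≤ m) (hp : 1 < p)
    (hpm : p ≤ π ^ 2 * m ^ 2 - 1) :
    AntitoneOn (fun t => cos (π * t) ^ p * powSum m (-p) t) (Set.Icc 0 (1 / 2)) := by
  have hπ := pi_pos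
  have hderiv : ∀ t ∈ Set.Icc (0 : ℝ) (1 / 2),
      HasDerivAt (fun t => cos (π * t) ^ p * powSum m (-p) t)
      (-sin (π * t) * π * p * cos (π * t) ^ (p - 1) * powSum m (-p) t
        + cos (π * t) ^ p * (p * powDiff m (-(p + 1)) t)) t := by
    intro t ht
    have hπt : HasDerivAt (fun t => π * t) π t := by simpa using (hasDerivAt_id t).const_mul π
    have hcos := ((hasDerivAt_cos (π * t)).comp t hπt).rpow_const (p := p) (Or.inr hp.le)
    have hS := hasDerivAt_powSum (s := -p) (by linarith [ht.2] : m - t ≠ 0) (by linarith [ht.1])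
    rw [show -p - 1 = -(p + 1) by ring, neg_neg] at hS
    exact hcos.mul hS
  refine antitoneOn_of_hasDerivWithinAt_nonpos (convex_Icc 0 (1 / 2))
    (fun t ht => (hderiv t ht).continuousAt.continuousWithinAt)
    (fun t ht => (hderiv t (interior_subset ht)).hasDerivWithinAt) fun t ht => ?_
  rw [interior_Icc] at ht
  obtain ⟨ht₀, ht⟩ := ht
  have hcos : 0 < cos (π * t) := cos_pos_of_mem_Ioo ⟨by nlinarith, by nlinarith⟩
  have hcore := cos_mul_powDiff_le hm ht₀.le ht (by linarith : 2 < p + 1) (by linarith)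
  rw [show 1 - (p + 1) = -p by ring] at hcore
  have hpow : cos (π * t) ^ p = cos (π * t) ^ (p - 1) * cos (π * t) := by
    rw [← rpow_add_one hcos.ne', sub_add_cancel]
  have hfactor : 0 ≤ p * cos (π * t) ^ (p - 1) := by positivity
  rw [hpow]
  linarith [mul_le_mul_of_nonneg_left hcore hfactor]

theorem psi_decreasing (k : ℕ) (hk : 2 ≤ k) (p : ℝ) (hp1 : 1 < p)
    (hp2 : p ≤ π ^ 2 * ((k : ℝ) - 1/2) ^ 2 - 1) :
    AntitoneOn (fun x : ℝ =>
        Real.sin (π * x) ^ p * (1 / ((k : ℝ) - x) ^ p + 1 / ((k : ℝ) + x - 1) ^ p))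
      (Set.Icc (1/2 : ℝ) 1) := by
  have hk' : (2 : ℝ) ≤ k := by exact_mod_cast hk
  have hφ := antitoneOn_cos_rpow_mul_powSum (by linarith : (3 / 2 : ℝ) ≤ k - 1 / 2) hp1 hp2
  have hshift : ∀ x ∈ Set.Icc (1 / 2 : ℝ) 1,
      sin (π * x) ^ p * (1 / ((k : ℝ) - x) ^ p + 1 / ((k : ℝ) + x - 1) ^ p)
        = cos (π * (x - 1 / 2)) ^ p * powSum (k - 1 / 2) (-p) (x - 1 / 2) := by
    rintro x ⟨hx₁, hx₂⟩
    rw [powSum, mul_sub, mul_one_div, cos_sub_pi_div_two, rpow_neg (by linarith),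
      rpow_neg (by linarith), one_div, one_div]
    ring_nf
  intro x hx y hy hxy
  simp only [hshift x hx, hshift y hy]
  exact hφ ⟨by linarith [hx.1], by linarith [hx.2]⟩ ⟨by linarith [hy.1], by linarith [hy.2]⟩
    (by linarith)
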